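/- arXiv:1706.04984 — 4 statements merged into one kernel-verified Lean document; each statement's English description precedes it below -/
import Mathlib

section
/- If ρ is a positive semidefinite operator on a finite-dimensional Hilbert space with full support (Supp ρ = V), and P, Q, S are positive semidefinite operators on V such that the operators √S P ρ P √S and √S Q ρ Q √S have orthogonal supports (i.e. their product is zero, equivalently Tr[√S P ρ P S Q ρ Q √S] = 0), and P, Q are projections, then Q S P = 0 (equivalently ‖P S Q‖₂ = 0). -/
open Matrix ComplexOrder

namespace Matrix.PosSemidef

/-- The positive semidefinite square root of a positive semidefinite matrix
(the definition removed from Mathlib, restored verbatim). -/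
noncomputable def sqrt {n 𝕜 : Type*} [Fintype n] [RCLike 𝕜] [DecidableEq n]
    {A : Matrix n n 𝕜} (hA : A.PosSemidef) : Matrix n n 𝕜 :=
  hA.1.eigenvectorUnitary.1 * diagonal ((↑) ∘ (√·) ∘ hA.1.eigenvalues) *
  (star hA.1.eigenvectorUnitary : Matrix n n 𝕜)

end Matrix.PosSemidef

/-!
Write `T = √S` and `R = √ρ`, and put `X = T P R`, `Y = T Q R`. Then the two operators in the
hypothesis are `X Xᴴ` and `Y Yᴴ`, so the hypothesis says `X Xᴴ Y Yᴴ = 0`. For any matrices this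
forces `Xᴴ Y = 0`: the Gram matrix `N = (Xᴴ Y)ᴴ (Xᴴ Y)` is Hermitian with `N² = 0`, hence `N = 0`.
Since `Xᴴ Y = R (P S Q) R` and `R` is invertible because `ρ` is positive definite, `P S Q = 0`,
and `Q S P = (P S Q)ᴴ`.
-/

namespace Matrix

variable {m n k R : Type*} [Fintype m] [Fintype n] [Fintype k]
  [PartialOrder R] [NonUnitalRing R] [StarRing R] [StarOrderedRing R] [NoZeroDivisors R]

theorem eq_zero_of_isHermitian_of_mul_self_eq_zero {N : Matrix n n R} (hN : N.IsHermitian)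
    (h : N * N = 0) : N = 0 :=
  conjTranspose_mul_self_eq_zero.mp (by rwa [hN.eq])

theorem conjTranspose_mul_eq_zero_of_mul_conjTranspose_mul_eq_zero {X : Matrix m n R}
    {Y : Matrix m k R} (h : X * Xᴴ * (Y * Yᴴ) = 0) : Xᴴ * Y = 0 := by
  have hN : ((Xᴴ * Y)ᴴ * (Xᴴ * Y)).IsHermitian := isHermitian_conjTranspose_mul_self _
  refine conjTranspose_mul_self_eq_zero.mp (eq_zero_of_isHermitian_of_mul_self_eq_zero hN ?_)
  calc (Xᴴ * Y)ᴴ * (Xᴴ * Y) * ((Xᴴ * Y)ᴴ * (Xᴴ * Y))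
      = Yᴴ * (X * Xᴴ * (Y * Yᴴ)) * X * Xᴴ * Y := by
        simp only [conjTranspose_mul, conjTranspose_conjTranspose, Matrix.mul_assoc]
    _ = 0 := by rw [h]; simp

end Matrix

namespace Matrix.PosSemidef

variable {n 𝕜 : Type*} [Fintype n] [RCLike 𝕜] [DecidableEq n] {A : Matrix n n 𝕜}

theorem posSemidef_sqrt (hA : A.PosSemidef) : hA.sqrt.PosSemidef := by
  have hD : (diagonal ((↑) ∘ (√·) ∘ hA.1.eigenvalues) : Matrix n n 𝕜).PosSemidef :=
    posSemidef_diagonal_iff.mpr fun i => by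
      simpa only [Function.comp_apply] using RCLike.ofReal_nonneg.mpr (Real.sqrt_nonneg _)
  have h := hD.mul_mul_conjTranspose_same hA.1.eigenvectorUnitary.1
  rwa [← star_eq_conjTranspose] at h

theorem sqrt_mul_self (hA : A.PosSemidef) : hA.sqrt * hA.sqrt = A := by
  set U : Matrix n n 𝕜 := hA.1.eigenvectorUnitary.1
  set D : Matrix n n 𝕜 := diagonal ((↑) ∘ (√·) ∘ hA.1.eigenvalues)
  have hU : star U * U = 1 := Unitary.star_mul_self_of_mem hA.1.eigenvectorUnitary.2
  have hDD : D * D = diagonal ((↑) ∘ hA.1.eigenvalues) := by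
    rw [diagonal_mul_diagonal]
    congr 1
    funext i
    simp only [Function.comp_apply, ← RCLike.ofReal_mul,
      Real.mul_self_sqrt (hA.eigenvalues_nonneg i)]
  calc hA.sqrt * hA.sqrt = U * (D * (star U * U) * D) * star U := by
        simp only [sqrt, U, D, Matrix.mul_assoc]
    _ = A := by
        have hA' := hA.1.spectral_theorem
        rw [Unitary.conjStarAlgAut_apply] at hA'
        rw [hU, Matrix.mul_one, hDD]
        exact hA'.symm

end Matrix.PosSemidef

theorem Matrix.PosDef.isUnit_sqrt {n 𝕜 : Type*} [Fintype n] [RCLike 𝕜] [DecidableEq n]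
    {A : Matrix n n 𝕜} (hA : A.PosDef) : IsUnit hA.posSemidef.sqrt :=
  isUnit_of_mul_isUnit_left (hA.posSemidef.sqrt_mul_self ▸ hA.isUnit)

theorem stmt0_general {V : Type*} [Fintype V] [DecidableEq V]
    (ρ P Q S : Matrix V V ℂ)
    (hρ : ρ.PosDef) (hS : S.PosSemidef)
    (hPh : P.IsHermitian)
    (hQh : Q.IsHermitian)
    (horth : (hS.sqrt * P * ρ * P * hS.sqrt) * (hS.sqrt * Q * ρ * Q * hS.sqrt) = 0) :
    Q * S * P = 0 := by
  set T := hS.sqrt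
  set R := hρ.posSemidef.sqrt
  have hT : Tᴴ = T := hS.posSemidef_sqrt.isHermitian.eq
  have hR : Rᴴ = R := hρ.posSemidef.posSemidef_sqrt.isHermitian.eq
  have hgram : ∀ M : Matrix V V ℂ, M.IsHermitian → T * M * R * (T * M * R)ᴴ = T * M * ρ * M * T :=
    fun M hM => calc
      _ = T * M * (R * R) * M * T := by
        simp only [conjTranspose_mul, hT, hR, hM.eq, Matrix.mul_assoc]
      _ = _ := by rw [hρ.posSemidef.sqrt_mul_self]
  have hXY : (T * P * R)ᴴ * (T * Q * R) = 0 :=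
    conjTranspose_mul_eq_zero_of_mul_conjTranspose_mul_eq_zero (by rwa [hgram P hPh, hgram Q hQh])
  have hRPSQR : R * (P * S * Q) * R = 0 := calc
    _ = R * P * (T * T) * Q * R := by rw [hS.sqrt_mul_self]; simp only [Matrix.mul_assoc]
    _ = 0 := by
      rw [← hXY]
      simp only [conjTranspose_mul, hT, hR, hPh.eq, Matrix.mul_assoc]
  have hPSQ : P * S * Q = 0 :=
    (hρ.isUnit_sqrt.mul_right_eq_zero).mp ((hρ.isUnit_sqrt.mul_left_eq_zero).mp hRPSQR)
  calc Q * S * P = (P * S * Q)ᴴ := by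
        simp only [conjTranspose_mul, hPh.eq, hQh.eq, hS.isHermitian.eq, Matrix.mul_assoc]
    _ = 0 := by rw [hPSQ, conjTranspose_zero]

/-- If ρ is positive definite (full support), P, Q are orthogonal
projections, S is positive semidefinite, and √S P ρ P √S and √S Q ρ Q √S have
orthogonal supports (their product is zero), then Q S P = 0. -/
theorem stmt0 {V : Type*} [Fintype V] [DecidableEq V]
    (ρ P Q S : Matrix V V ℂ)
    (hρ : ρ.PosDef) (hS : S.PosSemidef)
    (hPh : P.IsHermitian) (hP2 : P * P = P)
    (hQh : Q.IsHermitian) (hQ2 : Q * Q = Q)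
    (horth : (hS.sqrt * P * ρ * P * hS.sqrt) * (hS.sqrt * Q * ρ * Q * hS.sqrt) = 0) :
    Q * S * P = 0 :=
  stmt0_general ρ P Q S hρ hS hPh hQh horth
end

section
/- Let {M_j} and {N_k} be finite families of positive semidefinite operators on a finite-dimensional Hilbert space V such that M_j N_k = N_k M_j for all j, k. Then there exist finite-dimensional Hilbert spaces V₁, V₂, an isometry i : V → V₁ ⊗ V₂, and positive semidefinite operators M̄_j on V₁ and N̄_k on V₂ such that M_j = i* (M̄_j ⊗ I) i and N_k = i* (I ⊗ N̄_k) i for all j, k. -/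
open Matrix ComplexOrder Kronecker

/-!
Let `𝒜` be the unital *-algebra generated by the `M j`; every `N k` commutes with `𝒜`. Take a
Parseval frame `(e α)` of `𝒜` for the Hilbert–Schmidt inner product and put
`E = ∑ α, (e α)ᴴ * e α`. Then `E` is positive definite (as `1 ∈ 𝒜`) and commutes with `𝒜` and with
every `N k`, and `v ↦ ∑ α, |α⟩ ⊗ e α E^{-1/2} v` is an isometry `V → ℂ^ι ⊗ V`. It compresses
`X̄ ⊗ 1` to `X` for `X ∈ 𝒜`, where `X̄` is the matrix of right multiplication by `X` on `𝒜`, and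
`1 ⊗ Y` to `Y` for `Y` in the commutant of `𝒜`.
-/

theorem StarAlgebra.commute_of_mem_adjoin {R A : Type*} [CommSemiring R] [StarRing R]
    [Semiring A] [StarRing A] [Algebra R A] [StarModule R A] {s : Set A} {y : A}
    (hy : IsSelfAdjoint y) (hs : ∀ a ∈ s, Commute a y) {x : A} (hx : x ∈ adjoin R s) :
    Commute x y := by
  have hle : adjoin R s ≤ StarSubalgebra.centralizer R {y} := adjoin_le fun a ha => by
    simp only [SetLike.mem_coe, StarSubalgebra.mem_centralizer_iff, Set.mem_singleton_iff,
      forall_eq, hy.star_eq]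
    exact ⟨(hs a ha).symm, (hs a ha).symm⟩
  exact (((StarSubalgebra.mem_centralizer_iff R).1 (hle hx) y rfl).1).symm

namespace Matrix

section ColStack

variable {R : Type*} [CommSemiring R] [StarRing R] {ι κ m : Type*} [Fintype ι] [Fintype κ]

def colStack (F : ι → Matrix κ m R) : Matrix (ι × κ) m R :=
  of fun p w => F p.1 p.2 w

theorem conjTranspose_colStack_mul_kronecker_mul_colStack (F : ι → Matrix κ m R)
    (X : Matrix ι ι R) (Y : Matrix κ κ R) :
    (colStack F)ᴴ * (X ⊗ₖ Y) * colStack F = ∑ α, ∑ β, X α β • ((F α)ᴴ * Y * F β) := by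
  ext w w'
  simp only [mul_apply, conjTranspose_apply, colStack, of_apply, kroneckerMap_apply,
    Fintype.sum_prod_type, Matrix.sum_apply, Matrix.smul_apply, smul_eq_mul, Finset.sum_mul,
    Finset.mul_sum]
  calc _ = ∑ β, ∑ α, ∑ y, ∑ u, star (F α u w) * (X α β * Y u y) * F β y w' :=
        Finset.sum_congr rfl fun _ _ => Finset.sum_comm
    _ = _ := Finset.sum_comm.trans (Finset.sum_congr rfl fun α _ => Finset.sum_congr rfl
        fun β _ => Finset.sum_congr rfl fun y _ => Finset.sum_congr rfl fun u _ => by ring)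

theorem conjTranspose_colStack_mul_colStack [DecidableEq ι] [DecidableEq κ]
    (F : ι → Matrix κ m R) : (colStack F)ᴴ * colStack F = ∑ α, (F α)ᴴ * F α := by
  simpa [one_apply, ite_smul] using
    conjTranspose_colStack_mul_kronecker_mul_colStack F (1 : Matrix ι ι R) 1

theorem conjTranspose_submatrix_mul_kronecker_mul_submatrix {κ' : Type*} [Fintype κ']
    (i : Matrix (ι × κ) m R) (τ : κ' ≃ κ) (X : Matrix ι ι R) (Y : Matrix κ κ R) :
    (i.submatrix (Prod.map id τ) id)ᴴ * (X ⊗ₖ Y.submatrix τ τ) * i.submatrix (Prod.map id τ) id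
      = iᴴ * (X ⊗ₖ Y) * i := by
  have hτ : Prod.map id τ = Equiv.prodCongr (Equiv.refl ι) τ := rfl
  rw [kroneckerMap_submatrix_right, conjTranspose_submatrix, hτ, submatrix_mul_equiv,
    submatrix_mul_equiv, submatrix_id_id]

end ColStack

section InvSqrt

variable {n : Type*} [Fintype n] [DecidableEq n]

noncomputable def invSqrt (E : Matrix n n ℂ) : Matrix n n ℂ :=
  cfc (fun x : ℝ => (√x)⁻¹) E

theorem isHermitian_invSqrt (E : Matrix n n ℂ) : (invSqrt E).IsHermitian :=
  IsSelfAdjoint.isHermitian (cfc_predicate _ _)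

theorem _root_.Commute.invSqrt_left {E X : Matrix n n ℂ} (h : Commute E X) :
    Commute (invSqrt E) X :=
  h.cfc_real _

open MatrixOrder in
theorem PosDef.invSqrt_mul_mul_invSqrt {E : Matrix n n ℂ} (hE : E.PosDef) :
    invSqrt E * E * invSqrt E = 1 := by
  have hcont (f : ℝ → ℝ) : ContinuousOn f (spectrum ℝ E) := finite_real_spectrum.continuousOn f
  nth_rewrite 2 [← cfc_id' ℝ E]
  rw [invSqrt, ← cfc_mul _ _ E (hcont _) (hcont _), ← cfc_mul _ _ E (hcont _) (hcont _),
    ← cfc_one ℝ E]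
  refine cfc_congr fun x hx => ?_
  have hx : 0 < x := hE.isStrictlyPositive.spectrum_pos hx
  field_simp
  simp [Real.sq_sqrt hx.le]

end InvSqrt

section ParsevalFrame

variable {V ι : Type*} [Fintype V]

/-- The transpose of the matrix of right multiplication by `X` in the frame `e`:
`e α * X = ∑ β, frameMatrix e X α β • e β` whenever `e` is a Parseval frame of a space
containing `e α * X`. -/
def frameMatrix (e : ι → Matrix V V ℂ) (X : Matrix V V ℂ) : Matrix ι ι ℂ :=
  of fun α β => trace (e α * X * (e β)ᴴ)

theorem frameMatrix_eq_sum (e : ι → Matrix V V ℂ) (X : Matrix V V ℂ) :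
    frameMatrix e X = ∑ w, (of fun α u => e α w u) * X * (of fun α u => e α w u)ᴴ := by
  ext α β
  simp only [frameMatrix, of_apply, trace, diag, mul_apply, Matrix.sum_apply,
    conjTranspose_apply, Finset.sum_mul]

variable [Fintype ι]

theorem PosSemidef.frameMatrix {X : Matrix V V ℂ} (hX : X.PosSemidef) (e : ι → Matrix V V ℂ) :
    (frameMatrix e X).PosSemidef := by
  rw [frameMatrix_eq_sum]
  exact posSemidef_sum _ fun w _ => hX.mul_mul_conjTranspose_same _

/-- `e` is a Parseval frame of `W` for the Hilbert–Schmidt inner product `⟪y, x⟫ = tr (x yᴴ)`. -/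
structure IsParsevalFrame (W : Set (Matrix V V ℂ)) (e : ι → Matrix V V ℂ) : Prop where
  mem : ∀ α, e α ∈ W
  sum_trace_mul_conjTranspose_smul : ∀ x ∈ W, ∑ α, trace (x * (e α)ᴴ) • e α = x

theorem exists_isParsevalFrame [DecidableEq V] (W : Submodule ℂ (Matrix V V ℂ)) :
    ∃ (n : ℕ) (e : Fin n → Matrix V V ℂ), IsParsevalFrame (W : Set (Matrix V V ℂ)) e := by
  let _ := toMatrixNormedAddCommGroup (1 : Matrix V V ℂ) PosDef.one
  let _ := toMatrixInnerProductSpace (1 : Matrix V V ℂ) PosSemidef.one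
  let b := stdOrthonormalBasis ℂ W
  refine ⟨_, fun α => b α, ⟨fun α => (b α).2, fun x hx => ?_⟩⟩
  have hinner (y : Matrix V V ℂ) : inner ℂ y x = trace (x * yᴴ) := by
    change trace (x * 1 * yᴴ) = _
    rw [mul_one]
  simpa [Submodule.coe_sum, b.repr_apply_apply, hinner] using
    congrArg Subtype.val (b.sum_repr' ⟨x, hx⟩)

noncomputable def frameIsometry [DecidableEq V] (e : ι → Matrix V V ℂ) :
    Matrix (ι × V) V ℂ :=
  colStack fun α => e α * invSqrt (∑ β, (e β)ᴴ * e β)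

theorem conjTranspose_frameIsometry_mul_kronecker_mul_frameIsometry [DecidableEq V]
    (e : ι → Matrix V V ℂ) (X : Matrix ι ι ℂ) (Y : Matrix V V ℂ) :
    (frameIsometry e)ᴴ * (X ⊗ₖ Y) * frameIsometry e =
      invSqrt (∑ α, (e α)ᴴ * e α) * (∑ α, ∑ β, X α β • ((e α)ᴴ * Y * e β)) *
        invSqrt (∑ α, (e α)ᴴ * e α) := by
  simp only [frameIsometry, conjTranspose_colStack_mul_kronecker_mul_colStack, conjTranspose_mul,
    (isHermitian_invSqrt _).eq, Finset.mul_sum, Finset.sum_mul, mul_smul_comm, smul_mul_assoc,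
    mul_assoc]

namespace IsParsevalFrame

variable [DecidableEq V] {W : StarSubalgebra ℂ (Matrix V V ℂ)} {e : ι → Matrix V V ℂ}

theorem sum_trace_mul_conjTranspose_smul_conjTranspose (he : IsParsevalFrame (W : Set _) e)
    {x : Matrix V V ℂ} (hx : x ∈ W) : ∑ α, trace (e α * xᴴ) • (e α)ᴴ = xᴴ := by
  conv_rhs => rw [← he.sum_trace_mul_conjTranspose_smul x hx]
  simp only [conjTranspose_sum, conjTranspose_smul, ← trace_conjTranspose, conjTranspose_mul,
    conjTranspose_conjTranspose]

theorem sum_conjTranspose_mul_self_mul (he : IsParsevalFrame (W : Set _) e)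
    {x : Matrix V V ℂ} (hx : x ∈ W) :
    (∑ α, (e α)ᴴ * e α) * x = ∑ α, ∑ β, frameMatrix e x α β • ((e α)ᴴ * e β) := by
  rw [Finset.sum_mul]
  refine Finset.sum_congr rfl fun α _ => ?_
  conv_lhs => rw [mul_assoc, ← he.sum_trace_mul_conjTranspose_smul _ (mul_mem (he.mem α) hx)]
  simp only [Finset.mul_sum, mul_smul_comm, frameMatrix, of_apply]

theorem mul_sum_conjTranspose_mul_self (he : IsParsevalFrame (W : Set _) e)
    {x : Matrix V V ℂ} (hx : x ∈ W) :
    x * ∑ α, (e α)ᴴ * e α = ∑ α, ∑ β, frameMatrix e x α β • ((e α)ᴴ * e β) := by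
  rw [Finset.mul_sum, Finset.sum_comm]
  refine Finset.sum_congr rfl fun β _ => ?_
  have hxβ : e β * xᴴ ∈ W := mul_mem (he.mem β) (star_eq_conjTranspose x ▸ star_mem hx)
  rw [← mul_assoc, ← conjTranspose_conjTranspose x, ← conjTranspose_mul,
    ← he.sum_trace_mul_conjTranspose_smul_conjTranspose hxβ]
  simp only [Finset.sum_mul, smul_mul_assoc, frameMatrix, of_apply, conjTranspose_mul,
    conjTranspose_conjTranspose, mul_assoc]

theorem commute_sum_conjTranspose_mul_self (he : IsParsevalFrame (W : Set _) e)
    {x : Matrix V V ℂ} (hx : x ∈ W) : Commute x (∑ α, (e α)ᴴ * e α) :=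
  (he.mul_sum_conjTranspose_mul_self hx).trans (he.sum_conjTranspose_mul_self_mul hx).symm

theorem posDef_sum_conjTranspose_mul_self (he : IsParsevalFrame (W : Set _) e) :
    (∑ α, (e α)ᴴ * e α).PosDef := by
  classical
  rw [← conjTranspose_colStack_mul_colStack]
  refine PosDef.conjTranspose_mul_self _ fun v w hvw => ?_
  have hα (α : ι) : e α *ᵥ v = e α *ᵥ w := funext fun u => congrFun hvw (α, u)
  have h1 := he.sum_trace_mul_conjTranspose_smul 1 (one_mem W)
  calc v = (∑ α, trace (1 * (e α)ᴴ) • e α) *ᵥ v := by rw [h1, one_mulVec]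
    _ = (∑ α, trace (1 * (e α)ᴴ) • e α) *ᵥ w := by simp only [sum_mulVec, smul_mulVec, hα]
    _ = w := by rw [h1, one_mulVec]

theorem conjTranspose_frameIsometry_mul_self (he : IsParsevalFrame (W : Set _) e) :
    (frameIsometry e)ᴴ * frameIsometry e = 1 := by
  classical
  have h := conjTranspose_frameIsometry_mul_kronecker_mul_frameIsometry e 1 1
  rw [one_kronecker_one, Matrix.mul_one] at h
  simpa [one_apply, ite_smul, h] using he.posDef_sum_conjTranspose_mul_self.invSqrt_mul_mul_invSqrt

theorem conjTranspose_frameIsometry_mul_frameMatrix_kronecker_one_mul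
    (he : IsParsevalFrame (W : Set _) e) {x : Matrix V V ℂ} (hx : x ∈ W) :
    (frameIsometry e)ᴴ * (frameMatrix e x ⊗ₖ (1 : Matrix V V ℂ)) * frameIsometry e = x := by
  set E := ∑ α, (e α)ᴴ * e α
  have hxR : invSqrt E * x = x * invSqrt E :=
    (he.commute_sum_conjTranspose_mul_self hx).symm.invSqrt_left.eq
  rw [conjTranspose_frameIsometry_mul_kronecker_mul_frameIsometry]
  simp only [mul_one]
  have hassoc : invSqrt E * (x * E) * invSqrt E = x * (invSqrt E * E * invSqrt E) := by
    rw [← mul_assoc, hxR]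
    simp only [mul_assoc]
  rw [← he.mul_sum_conjTranspose_mul_self hx, hassoc,
    he.posDef_sum_conjTranspose_mul_self.invSqrt_mul_mul_invSqrt, mul_one]

theorem conjTranspose_frameIsometry_mul_one_kronecker_mul [DecidableEq ι]
    (he : IsParsevalFrame (W : Set _) e) {y : Matrix V V ℂ} (hy : ∀ x ∈ W, Commute x y) :
    (frameIsometry e)ᴴ * ((1 : Matrix ι ι ℂ) ⊗ₖ y) * frameIsometry e = y := by
  set E := ∑ α, (e α)ᴴ * e α
  have hEy : ∑ α, (e α)ᴴ * y * e α = E * y := by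
    rw [Finset.sum_mul]
    exact Finset.sum_congr rfl fun α _ => by rw [mul_assoc, ← (hy _ (he.mem α)).eq, mul_assoc]
  have hyR : invSqrt E * y = y * invSqrt E := (Commute.sum_left _ _ _ fun α _ =>
    (hy _ (star_eq_conjTranspose (e α) ▸ star_mem (he.mem α))).mul_left
      (hy _ (he.mem α))).invSqrt_left.eq
  rw [conjTranspose_frameIsometry_mul_kronecker_mul_frameIsometry]
  simp only [one_apply, ite_smul, one_smul, zero_smul, Finset.sum_ite_eq, Finset.mem_univ,
    if_true]
  rw [hEy, ← mul_assoc, mul_assoc _ y, ← hyR, ← mul_assoc,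
    he.posDef_sum_conjTranspose_mul_self.invSqrt_mul_mul_invSqrt, one_mul]

end IsParsevalFrame

end ParsevalFrame

theorem exists_isometry_kronecker_of_commute {V J K : Type*} [Fintype V] [DecidableEq V]
    (M : J → Matrix V V ℂ) (N : K → Matrix V V ℂ) (hM : ∀ j, (M j).PosSemidef)
    (hN : ∀ k, (N k).IsHermitian) (hcomm : ∀ j k, Commute (M j) (N k)) :
    ∃ (n : ℕ) (i : Matrix (Fin n × V) V ℂ) (Mb : J → Matrix (Fin n) (Fin n) ℂ),
      iᴴ * i = 1 ∧ (∀ j, (Mb j).PosSemidef) ∧ (∀ j, M j = iᴴ * (Mb j ⊗ₖ (1 : Matrix V V ℂ)) * i) ∧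
      ∀ k, N k = iᴴ * ((1 : Matrix (Fin n) (Fin n) ℂ) ⊗ₖ N k) * i := by
  set W := StarAlgebra.adjoin ℂ (Set.range M)
  obtain ⟨n, e, he⟩ : ∃ (n : ℕ) (e : Fin n → Matrix V V ℂ), IsParsevalFrame (W : Set _) e :=
    exists_isParsevalFrame (Subalgebra.toSubmodule W.toSubalgebra)
  have hNW (k : K) (x : Matrix V V ℂ) (hx : x ∈ W) : Commute x (N k) := by
    refine StarAlgebra.commute_of_mem_adjoin (hN k).isSelfAdjoint ?_ hx
    rintro _ ⟨j, rfl⟩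
    exact hcomm j k
  exact ⟨n, frameIsometry e, fun j => frameMatrix e (M j), he.conjTranspose_frameIsometry_mul_self,
    fun j => (hM j).frameMatrix e,
    fun j => (he.conjTranspose_frameIsometry_mul_frameMatrix_kronecker_one_mul
      (StarAlgebra.subset_adjoin ℂ _ ⟨j, rfl⟩)).symm,
    fun k => (he.conjTranspose_frameIsometry_mul_one_kronecker_mul (hNW k)).symm⟩

end Matrix

theorem stmt2_general {V J K : Type*} [Fintype V] [DecidableEq V]
    (M : J → Matrix V V ℂ) (N : K → Matrix V V ℂ)
    (hM : ∀ j, (M j).PosSemidef) (hN : ∀ k, (N k).PosSemidef)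
    (hcomm : ∀ j k, M j * N k = N k * M j) :
    ∃ (n₁ n₂ : ℕ) (i : Matrix (Fin n₁ × Fin n₂) V ℂ)
      (Mb : J → Matrix (Fin n₁) (Fin n₁) ℂ) (Nb : K → Matrix (Fin n₂) (Fin n₂) ℂ),
      iᴴ * i = 1 ∧ (∀ j, (Mb j).PosSemidef) ∧ (∀ k, (Nb k).PosSemidef) ∧
      (∀ j, M j = iᴴ * (Mb j ⊗ₖ (1 : Matrix (Fin n₂) (Fin n₂) ℂ)) * i) ∧
      (∀ k, N k = iᴴ * ((1 : Matrix (Fin n₁) (Fin n₁) ℂ) ⊗ₖ Nb k) * i) := by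
  obtain ⟨n₁, i, Mb, hi, hMb, hMi, hNi⟩ :=
    exists_isometry_kronecker_of_commute M N hM (fun k => (hN k).isHermitian) hcomm
  let τ := (Fintype.equivFin V).symm
  refine ⟨n₁, Fintype.card V, i.submatrix (Prod.map id τ) id, Mb, fun k => (N k).submatrix τ τ,
    ?_, hMb, fun k => (hN k).submatrix τ, fun j => ?_, fun k => ?_⟩
  · have h := conjTranspose_submatrix_mul_kronecker_mul_submatrix i τ 1 1
    simpa only [submatrix_one_equiv, one_kronecker_one, Matrix.mul_one, hi] using h
  · rw [← submatrix_one_equiv τ, conjTranspose_submatrix_mul_kronecker_mul_submatrix]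
    exact hMi j
  · rw [conjTranspose_submatrix_mul_kronecker_mul_submatrix]
    exact hNi k

/-- Tsirelson: commuting families of PSD operators on a
finite-dimensional space arise as pullbacks, via an isometry into a tensor
product, of operators acting on the two factors. -/
theorem stmt2 {V J K : Type*} [Fintype V] [DecidableEq V] [Fintype J] [Fintype K]
    (M : J → Matrix V V ℂ) (N : K → Matrix V V ℂ)
    (hM : ∀ j, (M j).PosSemidef) (hN : ∀ k, (N k).PosSemidef)
    (hcomm : ∀ j k, M j * N k = N k * M j) :
    ∃ (n₁ n₂ : ℕ) (i : Matrix (Fin n₁ × Fin n₂) V ℂ)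
      (Mb : J → Matrix (Fin n₁) (Fin n₁) ℂ) (Nb : K → Matrix (Fin n₂) (Fin n₂) ℂ),
      iᴴ * i = 1 ∧ (∀ j, (Mb j).PosSemidef) ∧ (∀ k, (Nb k).PosSemidef) ∧
      (∀ j, M j = iᴴ * (Mb j ⊗ₖ (1 : Matrix (Fin n₂) (Fin n₂) ℂ)) * i) ∧
      (∀ k, N k = iᴴ * ((1 : Matrix (Fin n₁) (Fin n₁) ℂ) ⊗ₖ Nb k) * i) :=
  stmt2_general M N hM hN hcomm
end

section
/- Let Λ be a density operator on A ⊗ B (finite-dimensional) and {F_i}_{i=1}^n a projective measurement on A. Suppose there is a POVM {G_i} on B with Σ_i Tr[(F_i ⊗ G_i) Λ] = 1 − δ. Then the pinching channel Φ(X) = Σ_i F_i X F_i applied to the marginal α = Tr_B Λ satisfies ‖α − Σ_i F_i α F_i‖₁ ≤ 2√δ + δ. -/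
open Matrix ComplexOrder Kronecker

/-- Partial trace over the second tensor factor. -/
noncomputable def ptraceRight {A B : Type*} [Fintype A] [Fintype B]
    (Λ : Matrix (A × B) (A × B) ℂ) : Matrix A A ℂ :=
  Matrix.of fun i j => ∑ b, Λ (i, b) (j, b)

/-- Trace norm Tr√(MᴴM). -/
noncomputable def traceNorm {n : Type*} [Fintype n] [DecidableEq n]
    (M : Matrix n n ℂ) : ℝ :=
  (((Matrix.posSemidef_conjTranspose_mul_self M).1.eigenvectorUnitary.1 *
      diagonal (fun i => ((Real.sqrt ((Matrix.posSemidef_conjTranspose_mul_self M).1.eigenvalues i) : ℝ) : ℂ)) *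
      (star (Matrix.posSemidef_conjTranspose_mul_self M).1.eigenvectorUnitary : Matrix n n ℂ)).trace).re

/-!
Lift to `A × B` via `Pᵢ = Fᵢ ⊗ 1` and `Qᵢ = 1 ⊗ Gᵢ`. The difference `α - Σ Fᵢ α Fᵢ` is Hermitian,
so its trace norm is `Re Tr (U ·)` for a unitary `U` (the sign of the matrix), and
`Tr (U Tr_B X) = Tr ((U ⊗ 1) X)`; it remains to bound `Re Tr (V (Λ - Σ Pᵢ Λ Pᵢ))` for a unitary
`V` commuting with every `Qᵢ`. Since `Σ Qᵢ = 1`,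
`Λ - Σ Pᵢ Λ Pᵢ = Σ (1 - Pᵢ) Λ Qᵢ + Σ Pᵢ Λ Qᵢ (1 - Pᵢ) - Σ Pᵢ Λ (1 - Qᵢ) Pᵢ`.
Writing `Λ = S²`, `Qᵢ = gᵢ²`, `1 - Qᵢ = hᵢ²`, each of the three sums becomes `Σᵢ Tr (V Xᵢ Yᵢ)`
(e.g. `Xᵢ = (1 - Pᵢ) gᵢ S`, `Yᵢ = S gᵢ`), with Hilbert–Schmidt weights
`(Σ ‖Xᵢ‖₂², Σ ‖Yᵢ‖₂²)` equal to `(δ, 1)`, `(1 - δ, δ)` and `(δ, δ)`.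
Cauchy–Schwarz bounds the three terms by `√δ`, `√δ` and `δ`.
-/

open scoped MatrixOrder

section Kronecker

variable {ι l m n p α : Type*} [Fintype ι] [NonUnitalNonAssocSemiring α]

theorem sum_kronecker (A : ι → Matrix l m α) (B : Matrix n p α) :
    (∑ i, A i) ⊗ₖ B = ∑ i, A i ⊗ₖ B := by
  ext
  simp [Matrix.sum_apply, Finset.sum_mul]

theorem kronecker_sum (A : Matrix l m α) (B : ι → Matrix n p α) :
    A ⊗ₖ (∑ i, B i) = ∑ i, A ⊗ₖ B i := by
  ext
  simp [Matrix.sum_apply, Finset.mul_sum]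

end Kronecker

section PartialTrace

variable {A B : Type*} [Fintype A] [Fintype B]

theorem ptraceRight_sub (M N : Matrix (A × B) (A × B) ℂ) :
    ptraceRight (M - N) = ptraceRight M - ptraceRight N := by
  ext i j
  simp [ptraceRight, Finset.sum_sub_distrib]

theorem ptraceRight_sum {ι : Type*} [Fintype ι] (M : ι → Matrix (A × B) (A × B) ℂ) :
    ptraceRight (∑ k, M k) = ∑ k, ptraceRight (M k) := by
  ext i j
  simp only [ptraceRight, of_apply, Matrix.sum_apply]
  exact Finset.sum_comm

theorem conjTranspose_ptraceRight (M : Matrix (A × B) (A × B) ℂ) :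
    (ptraceRight M)ᴴ = ptraceRight Mᴴ := by
  ext i j
  simp [ptraceRight, conjTranspose_apply]

theorem trace_ptraceRight (M : Matrix (A × B) (A × B) ℂ) :
    (ptraceRight M).trace = M.trace := by
  simp [trace, ptraceRight, Fintype.sum_prod_type]

variable [DecidableEq B]

theorem ptraceRight_kronecker_one_mul (X : Matrix A A ℂ) (M : Matrix (A × B) (A × B) ℂ) :
    ptraceRight ((X ⊗ₖ (1 : Matrix B B ℂ)) * M) = X * ptraceRight M := by
  ext i j
  simp only [ptraceRight, mul_apply, kroneckerMap_apply, one_apply, mul_ite, mul_one, mul_zero,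
    ite_mul, zero_mul, Fintype.sum_prod_type, Finset.sum_ite_eq, Finset.mem_univ, ↓reduceIte,
    of_apply, Finset.mul_sum]
  exact Finset.sum_comm

theorem ptraceRight_mul_kronecker_one (M : Matrix (A × B) (A × B) ℂ) (X : Matrix A A ℂ) :
    ptraceRight (M * (X ⊗ₖ (1 : Matrix B B ℂ))) = ptraceRight M * X := by
  ext i j
  simp only [ptraceRight, mul_apply, kroneckerMap_apply, one_apply, mul_ite, mul_one, mul_zero,
    Fintype.sum_prod_type, Finset.sum_ite_eq', Finset.mem_univ, ↓reduceIte, of_apply,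
    Finset.sum_mul]
  exact Finset.sum_comm

theorem trace_mul_ptraceRight (X : Matrix A A ℂ) (M : Matrix (A × B) (A × B) ℂ) :
    (X * ptraceRight M).trace = ((X ⊗ₖ (1 : Matrix B B ℂ)) * M).trace := by
  rw [← ptraceRight_kronecker_one_mul, trace_ptraceRight]

end PartialTrace

section TraceNorm

variable {n : Type*} [Fintype n] [DecidableEq n]

theorem traceNorm_eq_re_trace_abs (M : Matrix n n ℂ) : traceNorm M = (CFC.abs M).trace.re := by
  have hM := posSemidef_conjTranspose_mul_self M
  rw [CFC.abs, CFC.sqrt_eq_cfc, star_eq_conjTranspose, cfc_nnreal_eq_real _ _ hM.nonneg,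
    hM.1.cfc_eq, IsHermitian.cfc, Unitary.conjStarAlgAut_apply, traceNorm]
  congr 5
  ext i
  simp [max_eq_left (hM.eigenvalues_nonneg i)]

theorem Matrix.IsHermitian.exists_unitary_traceNorm_eq {T : Matrix n n ℂ}
    (hT : T.IsHermitian) : ∃ U ∈ unitary (Matrix n n ℂ), traceNorm T = (U * T).trace.re := by
  -- a sign function with `s 0 = 1`, so that `s * s = 1` and `cfc s T` is unitary
  let s : ℝ → ℝ := fun x => if 0 ≤ x then 1 else -1
  have hs : ContinuousOn s (spectrum ℝ T) := T.finite_real_spectrum.continuousOn _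
  refine ⟨cfc s T, ?_, ?_⟩
  · rw [← unitaryGroup, mem_unitaryGroup_iff', (cfc_predicate s T).star_eq, ← cfc_mul s s T,
      ← cfc_one ℝ T]
    refine cfc_congr fun x _ => ?_
    by_cases hx : 0 ≤ x <;> simp [s, hx]
  · rw [traceNorm_eq_re_trace_abs, CFC.abs_eq_cfc_norm T hT.isSelfAdjoint]
    conv_rhs => enter [1, 1, 2]; rw [← cfc_id' ℝ T]
    rw [← cfc_mul s _ T]
    congr 2
    refine cfc_congr fun x _ => ?_
    by_cases hx : 0 ≤ x
    · simp [s, hx, abs_of_nonneg hx]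
    · simp [s, hx, abs_of_neg (not_le.mp hx)]

theorem Matrix.PosSemidef.exists_sqrt_commute {Q : Matrix n n ℂ} (hQ : Q.PosSemidef) :
    ∃ g : Matrix n n ℂ, gᴴ = g ∧ g * g = Q ∧ ∀ X, Commute X Q → Commute g X := by
  refine ⟨CFC.sqrt Q, (CFC.sqrt_nonneg Q).posSemidef.1, CFC.sqrt_mul_sqrt_self Q hQ.nonneg,
    fun X hX => ?_⟩
  rw [CFC.sqrt_eq_cfc]
  exact hX.symm.cfc_nnreal _

end TraceNorm

section Frobenius

variable {n ι : Type*} [Fintype n] [Fintype ι]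

theorem re_trace_conjTranspose_mul_self (X : Matrix n n ℂ) :
    (Xᴴ * X).trace.re = ∑ j, ∑ i, ‖X i j‖ ^ 2 := by
  simp only [trace, diag_apply, mul_apply, conjTranspose_apply, Complex.re_sum]
  refine Fintype.sum_congr _ _ fun j => Fintype.sum_congr _ _ fun i => ?_
  rw [Complex.sq_norm, Complex.normSq_apply]
  simp [Complex.mul_re]

theorem re_trace_conjTranspose_mul_self_nonneg (X : Matrix n n ℂ) :
    0 ≤ (Xᴴ * X).trace.re := by
  rw [re_trace_conjTranspose_mul_self]
  positivity

theorem norm_sum_trace_mul_le (X Y : ι → Matrix n n ℂ) :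
    ‖∑ k, (X k * Y k).trace‖ ≤
      √(∑ k, ((X k)ᴴ * X k).trace.re) * √(∑ k, ((Y k)ᴴ * Y k).trace.re) := by
  simp only [re_trace_conjTranspose_mul_self]
  simp only [trace, diag_apply, mul_apply]
  calc ‖∑ k, ∑ i, ∑ j, X k i j * Y k j i‖
      ≤ ∑ k, ∑ i, ∑ j, ‖X k i j‖ * ‖Y k j i‖ := by
        refine (norm_sum_le _ _).trans <| Finset.sum_le_sum fun k _ => ?_
        refine (norm_sum_le _ _).trans <| Finset.sum_le_sum fun i _ => ?_
        exact (norm_sum_le _ _).trans_eq <| Finset.sum_congr rfl fun j _ => norm_mul _ _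
    _ ≤ √(∑ k, ∑ i, ∑ j, ‖X k i j‖ ^ 2) * √(∑ k, ∑ i, ∑ j, ‖Y k j i‖ ^ 2) := by
        simp only [← Fintype.sum_prod_type']
        exact Real.sum_mul_le_sqrt_mul_sqrt _ _ _
    _ = √(∑ k, ∑ j, ∑ i, ‖X k i j‖ ^ 2) * √(∑ k, ∑ j, ∑ i, ‖Y k i j‖ ^ 2) := by
        congr 2
        exact Finset.sum_congr rfl fun k _ => Finset.sum_comm

theorem norm_sum_trace_unitary_mul_le [DecidableEq n] {V : Matrix n n ℂ}
    (hV : V ∈ unitary (Matrix n n ℂ)) (X Y : ι → Matrix n n ℂ) :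
    ‖∑ k, (V * X k * Y k).trace‖ ≤
      √(∑ k, ((X k)ᴴ * X k).trace.re) * √(∑ k, ((Y k)ᴴ * Y k).trace.re) := by
  have hVV : Vᴴ * V = 1 := hV.1
  convert norm_sum_trace_mul_le (fun k => V * X k) Y using 6 with k
  rw [conjTranspose_mul, mul_assoc, ← mul_assoc Vᴴ, hVV, one_mul]

end Frobenius

theorem sub_sum_mul_mul_eq {R ι : Type*} [Ring R] [Fintype ι] (a : R) (p q : ι → R)
    (hq : ∑ k, q k = 1) :
    a - ∑ k, p k * a * p k = ∑ k, (1 - p k) * a * q k + ∑ k, p k * a * q k * (1 - p k) -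
      ∑ k, p k * a * (1 - q k) * p k := by
  have ha : ∑ k, a * q k = a := by rw [← Finset.mul_sum, hq, mul_one]
  simp only [sub_mul, mul_sub, one_mul, mul_one, Finset.sum_sub_distrib, ha]
  abel

section Pinching

variable {n ι R : Type*} [Fintype n] [Fintype ι] [CommRing R]

theorem trace_mul_mul_self_mul_mul_self_mul {S g W Z : Matrix n n R} (hW : Commute g W)
    (hZ : Commute g Z) : (W * (S * S) * (g * g) * Z).trace = (W * g * S * (S * g * Z)).trace := by
  calc (W * (S * S) * (g * g) * Z).trace = ((W * (S * S) * g) * (g * Z)).trace := by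
        simp only [mul_assoc]
    _ = (g * (Z * W) * (S * S * g)).trace := by
        rw [trace_mul_comm]
        simp only [mul_assoc]
    _ = (Z * (W * g * S * (S * g))).trace := by
        rw [(hZ.mul_right hW).eq]
        simp only [mul_assoc]
    _ = _ := by
        rw [trace_mul_comm]
        simp only [mul_assoc]

section StarProjection

variable [StarRing R]

theorem IsStarProjection.trace_conjTranspose_mul_self_mul_mul {W g S : Matrix n n R}
    (hW : IsStarProjection W) (hg : gᴴ = g) (hS : Sᴴ = S) (hWg : Commute g W) :
    ((W * g * S)ᴴ * (W * g * S)).trace = (W * (g * g) * (S * S)).trace := by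
  have hWW : Wᴴ * W = W := by rw [show Wᴴ = W from hW.isSelfAdjoint, hW.isIdempotentElem.eq]
  calc ((W * g * S)ᴴ * (W * g * S)).trace = (S * (g * (Wᴴ * W) * g * S)).trace := by
        rw [conjTranspose_mul, conjTranspose_mul, hg, hS]
        simp only [mul_assoc]
    _ = (W * (g * g) * (S * S)).trace := by
        rw [trace_mul_comm, hWW, hWg.eq]
        simp only [mul_assoc]

theorem IsStarProjection.trace_conjTranspose_mul_self_mul_mul' {W g S : Matrix n n R}
    (hW : IsStarProjection W) (hg : gᴴ = g) (hS : Sᴴ = S) (hWg : Commute g W) :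
    ((S * g * W)ᴴ * (S * g * W)).trace = (W * (g * g) * (S * S)).trace := by
  have hW' : Wᴴ = W := hW.isSelfAdjoint
  rw [trace_mul_comm, ← hW.trace_conjTranspose_mul_self_mul_mul hg hS hWg]
  simp only [conjTranspose_mul, hg, hS, hW', mul_assoc]

end StarProjection

variable [DecidableEq n]

theorem trace_mul_sub_pinching_eq {S V : Matrix n n R} {P g h : ι → Matrix n n R}
    (hgsum : ∑ k, g k * g k = 1) (hgh : ∀ k, h k * h k = 1 - g k * g k)
    (hgV : ∀ k, Commute (g k) V) (hgP : ∀ k, Commute (g k) (P k))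
    (hhV : ∀ k, Commute (h k) V) (hhP : ∀ k, Commute (h k) (P k)) :
    (V * (S * S - ∑ k, P k * (S * S) * P k)).trace =
      ∑ k, (V * ((1 - P k) * g k * S) * (S * g k)).trace +
      ∑ k, (V * (P k * g k * S) * (S * g k * (1 - P k))).trace -
      ∑ k, (V * (P k * h k * S) * (S * h k * P k)).trace := by
  rw [sub_sum_mul_mul_eq (S * S) P _ hgsum, mul_sub, mul_add, trace_sub, trace_add]
  simp only [Finset.mul_sum, trace_sum, ← hgh]
  have hgP' : ∀ k, Commute (g k) (1 - P k) := fun k => (Commute.one_right _).sub_right (hgP k)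
  have e1 : ∀ k, (V * ((1 - P k) * (S * S) * (g k * g k))).trace =
      (V * ((1 - P k) * g k * S) * (S * g k)).trace := fun k => by
    simpa only [mul_assoc, mul_one] using trace_mul_mul_self_mul_mul_self_mul (S := S)
      ((hgV k).mul_right (hgP' k)) (Commute.one_right (g k))
  have e2 : ∀ k, (V * (P k * (S * S) * (g k * g k) * (1 - P k))).trace =
      (V * (P k * g k * S) * (S * g k * (1 - P k))).trace := fun k => by
    simpa only [mul_assoc] using trace_mul_mul_self_mul_mul_self_mul (S := S)
      ((hgV k).mul_right (hgP k)) (hgP' k)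
  have e3 : ∀ k, (V * (P k * (S * S) * (h k * h k) * P k)).trace =
      (V * (P k * h k * S) * (S * h k * P k)).trace := fun k => by
    simpa only [mul_assoc] using trace_mul_mul_self_mul_mul_self_mul (S := S)
      ((hhV k).mul_right (hhP k)) (hhP k)
  simp only [e1, e2, e3]

end Pinching

section Bound

variable {n ι : Type*} [Fintype n] [DecidableEq n] [Fintype ι]

theorem re_trace_unitary_mul_sub_pinching_mul_self_le {S V : Matrix n n ℂ}
    {P g h : ι → Matrix n n ℂ} {δ : ℝ} (hS : Sᴴ = S) (htr : (S * S).trace = 1)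
    (hV : V ∈ unitary (Matrix n n ℂ)) (hP : ∀ k, IsStarProjection (P k)) (hPsum : ∑ k, P k = 1)
    (hg : ∀ k, (g k)ᴴ = g k) (hh : ∀ k, (h k)ᴴ = h k)
    (hgsum : ∑ k, g k * g k = 1) (hgh : ∀ k, h k * h k = 1 - g k * g k)
    (hgV : ∀ k, Commute (g k) V) (hgP : ∀ k, Commute (g k) (P k))
    (hhV : ∀ k, Commute (h k) V) (hhP : ∀ k, Commute (h k) (P k))
    (hguess : (∑ k, (P k * (g k * g k) * (S * S)).trace).re = 1 - δ) :
    (V * (S * S - ∑ k, P k * (S * S) * P k)).trace.re ≤ 2 * √δ + δ := by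
  have hgP' : ∀ k, Commute (g k) (1 - P k) := fun k => (Commute.one_right _).sub_right (hgP k)
  have hG1 : ∑ k, (g k * g k * (S * S)).trace.re = 1 := by
    rw [← Complex.re_sum, ← trace_sum, ← Finset.sum_mul, hgsum, one_mul, htr, Complex.one_re]
  have hP1 : ∑ k, (P k * (S * S)).trace.re = 1 := by
    rw [← Complex.re_sum, ← trace_sum, ← Finset.sum_mul, hPsum, one_mul, htr, Complex.one_re]
  have hPG : ∑ k, (P k * (g k * g k) * (S * S)).trace.re = 1 - δ := by
    rw [← Complex.re_sum, hguess]
  have t1 := fun k => (hP k).one_sub.trace_conjTranspose_mul_self_mul_mul (hg k) hS (hgP' k)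
  have t1' := fun k => IsStarProjection.trace_conjTranspose_mul_self_mul_mul' (.one _) (hg k) hS
    (Commute.one_right (g k))
  have t2 := fun k => (hP k).trace_conjTranspose_mul_self_mul_mul (hg k) hS (hgP k)
  have t2' := fun k => (hP k).one_sub.trace_conjTranspose_mul_self_mul_mul' (hg k) hS (hgP' k)
  have t3 := fun k => (hP k).trace_conjTranspose_mul_self_mul_mul (hh k) hS (hhP k)
  have t3' := fun k => (hP k).trace_conjTranspose_mul_self_mul_mul' (hh k) hS (hhP k)
  simp only [mul_one, one_mul] at t1'
  have b1 := norm_sum_trace_unitary_mul_le hV (fun k => (1 - P k) * g k * S) (fun k => S * g k)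
  have b2 := norm_sum_trace_unitary_mul_le hV (fun k => P k * g k * S)
    (fun k => S * g k * (1 - P k))
  have b3 := norm_sum_trace_unitary_mul_le hV (fun k => P k * h k * S) (fun k => S * h k * P k)
  have w1 : ∑ k, ((1 - P k) * (g k * g k) * (S * S)).trace.re = δ := by
    simp only [sub_mul, one_mul, trace_sub, Complex.sub_re, Finset.sum_sub_distrib, hG1, hPG,
      sub_sub_cancel]
  have w2 : ∑ k, (P k * (h k * h k) * (S * S)).trace.re = δ := by
    simp only [hgh, mul_sub, mul_one, sub_mul, trace_sub, Complex.sub_re, Finset.sum_sub_distrib,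
      hP1, hPG, sub_sub_cancel]
  have hδ : 0 ≤ δ := by
    rw [← w1]
    exact Finset.sum_nonneg fun k _ => t1 k ▸ re_trace_conjTranspose_mul_self_nonneg _
  simp only [t1, t1', t2, t2', t3, t3'] at b1 b2 b3
  rw [w1, hG1, Real.sqrt_one, mul_one] at b1
  rw [hPG, w1] at b2
  rw [w2, Real.mul_self_sqrt hδ] at b3
  have hsqrt : √(1 - δ) * √δ ≤ √δ :=
    mul_le_of_le_one_left (Real.sqrt_nonneg δ) (Real.sqrt_le_one.mpr (by linarith))
  rw [trace_mul_sub_pinching_eq hgsum hgh hgV hgP hhV hhP, Complex.sub_re, Complex.add_re]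
  linarith [Complex.re_le_norm (∑ k, (V * ((1 - P k) * g k * S) * (S * g k)).trace),
    Complex.re_le_norm (∑ k, (V * (P k * g k * S) * (S * g k * (1 - P k))).trace),
    neg_le_of_abs_le <|
      Complex.abs_re_le_norm (∑ k, (V * (P k * h k * S) * (S * h k * P k)).trace)]

theorem re_trace_unitary_mul_sub_pinching_le {Λ V : Matrix n n ℂ} {P Q : ι → Matrix n n ℂ}
    {δ : ℝ} (hΛ : Λ.PosSemidef) (htr : Λ.trace = 1) (hV : V ∈ unitary (Matrix n n ℂ))
    (hP : ∀ k, IsStarProjection (P k)) (hPsum : ∑ k, P k = 1)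
    (hQ : ∀ k, (Q k).PosSemidef) (hQsum : ∑ k, Q k = 1)
    (hPQ : ∀ k, Commute (P k) (Q k)) (hVQ : ∀ k, Commute V (Q k))
    (hguess : (∑ k, (P k * Q k * Λ).trace).re = 1 - δ) :
    (V * (Λ - ∑ k, P k * Λ * P k)).trace.re ≤ 2 * √δ + δ := by
  classical
  have hQ' : ∀ k, (1 - Q k).PosSemidef := fun k => by
    rw [← hQsum, ← Finset.sum_erase_add _ _ (Finset.mem_univ k), add_sub_cancel_right]
    exact posSemidef_sum _ fun j _ => hQ j
  obtain ⟨S, hS, rfl, -⟩ := hΛ.exists_sqrt_commute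
  choose g hg hgQ hgc using fun k => (hQ k).exists_sqrt_commute
  choose h hh hhQ hhc using fun k => (hQ' k).exists_sqrt_commute
  refine re_trace_unitary_mul_sub_pinching_mul_self_le hS htr hV hP hPsum hg hh
    (by simp only [hgQ, hQsum]) (fun k => by rw [hhQ, hgQ]) (fun k => hgc k _ (hVQ k))
    (fun k => hgc k _ (hPQ k)) (fun k => hhc k _ ((Commute.one_right _).sub_right (hVQ k)))
    (fun k => hhc k _ ((Commute.one_right _).sub_right (hPQ k)))
    (by simpa only [hgQ] using hguess)

end Bound

theorem stmt5_general {A B ι : Type*} [Fintype A] [DecidableEq A] [Fintype B] [DecidableEq B]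
    [Fintype ι]
    (Λ : Matrix (A × B) (A × B) ℂ) (hΛ : Λ.PosSemidef) (htr : Λ.trace = 1)
    (F : ι → Matrix A A ℂ) (G : ι → Matrix B B ℂ) (δ : ℝ)
    (hFh : ∀ i, (F i).IsHermitian) (hF2 : ∀ i, F i * F i = F i)
    (hFsum : ∑ i, F i = 1)
    (hG : ∀ i, (G i).PosSemidef) (hGsum : ∑ i, G i = 1)
    (hguess : (∑ i, ((F i ⊗ₖ G i) * Λ).trace).re = 1 - δ) :
    traceNorm (ptraceRight Λ - ∑ i, F i * ptraceRight Λ * F i) ≤ 2 * Real.sqrt δ + δ := by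
  have hα : (ptraceRight Λ).IsHermitian := by
    rw [IsHermitian, conjTranspose_ptraceRight, hΛ.1.eq]
  have hT : (ptraceRight Λ - ∑ i, F i * ptraceRight Λ * F i).IsHermitian :=
    hα.sub <| isSelfAdjoint_sum _ fun i _ => by
      simpa only [(hFh i).eq] using (isHermitian_mul_mul_conjTranspose (F i) hα).isSelfAdjoint
  obtain ⟨U, hU, hnorm⟩ := hT.exists_unitary_traceNorm_eq
  have hpinch : ptraceRight Λ - ∑ i, F i * ptraceRight Λ * F i =
      ptraceRight (Λ - ∑ i, (F i ⊗ₖ 1) * Λ * (F i ⊗ₖ (1 : Matrix B B ℂ))) := by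
    simp only [ptraceRight_sub, ptraceRight_sum, ptraceRight_mul_kronecker_one,
      ptraceRight_kronecker_one_mul]
  rw [hnorm, hpinch, trace_mul_ptraceRight]
  refine re_trace_unitary_mul_sub_pinching_le hΛ htr (kronecker_mem_unitary hU (one_mem _))
    (fun i => ⟨?_, ?_⟩) ?_ (fun i => PosSemidef.one.kronecker (hG i)) ?_ (fun i => ?_)
    (fun i => ?_) ?_
  · rw [IsIdempotentElem, ← mul_kronecker_mul, hF2, one_mul]
  · rw [IsSelfAdjoint, star_eq_conjTranspose, conjTranspose_kronecker, (hFh i).eq,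
      conjTranspose_one]
  · rw [← sum_kronecker, hFsum, one_kronecker_one]
  · rw [← kronecker_sum, hGsum, one_kronecker_one]
  · simp only [Commute, SemiconjBy, ← mul_kronecker_mul, mul_one, one_mul]
  · simp only [Commute, SemiconjBy, ← mul_kronecker_mul, mul_one, one_mul]
  · simpa only [← mul_kronecker_mul, mul_one, one_mul] using hguess

/-- if the projective measurement {F_i} on A of a bipartite density
operator Λ is guessed with probability 1 − δ by a POVM {G_i} on B, then the
pinching of the marginal α = Tr_B Λ moves it by at most 2√δ + δ in trace norm. -/
theorem stmt5 {A B ι : Type*} [Fintype A] [DecidableEq A] [Fintype B] [DecidableEq B]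
    [Fintype ι]
    (Λ : Matrix (A × B) (A × B) ℂ) (hΛ : Λ.PosSemidef) (htr : Λ.trace = 1)
    (F : ι → Matrix A A ℂ) (G : ι → Matrix B B ℂ) (δ : ℝ) (hδ0 : 0 ≤ δ)
    (hFh : ∀ i, (F i).IsHermitian) (hF2 : ∀ i, F i * F i = F i)
    (hForth : ∀ i j, i ≠ j → F i * F j = 0) (hFsum : ∑ i, F i = 1)
    (hG : ∀ i, (G i).PosSemidef) (hGsum : ∑ i, G i = 1)
    (hguess : (∑ i, ((F i ⊗ₖ G i) * Λ).trace).re = 1 - δ) :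
    traceNorm (ptraceRight Λ - ∑ i, F i * ptraceRight Λ * F i) ≤ 2 * Real.sqrt δ + δ :=
  stmt5_general Λ hΛ htr F G δ hFh hF2 hFsum hG hGsum hguess
end

section
/- Let q be a probability distribution on {1,…,n} × B with q(a,b) > 0 for all a,b, and let δ_{ab} ∈ [0,1] satisfy Σ_{ab} q(a,b) δ_{ab} = ε. Then Σ_{ab} q(a,b) Σ_{i=1}^{a−1} 3√(δ_{ib}) ≤ 3 √(Σ_{ab} q(b)²/q(a,b)) · √ε, where q(b) = Σ_a q(a,b). -/
open Finset

theorem Finset.sum_mul_sum_filter_comm {ι R : Type*} [Fintype ι] [CommSemiring R]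
    (r : ι → ι → Prop) [DecidableRel r] (w f : ι → R) :
    ∑ a, w a * ∑ i ∈ univ.filter (r · a), f i = ∑ i, f i * ∑ a ∈ univ.filter (r i ·), w a := by
  simp only [mul_sum, sum_filter, mul_ite, mul_zero]
  rw [sum_comm]
  simp only [mul_comm]

theorem Real.sum_mul_sqrt_le_sqrt_sum_sq_div_mul_sqrt_sum_mul {ι : Type*} (s : Finset ι)
    {c w d : ι → ℝ} (hw : ∀ i ∈ s, 0 < w i) (hd : ∀ i ∈ s, 0 ≤ d i) :
    ∑ i ∈ s, c i * √(d i) ≤ √(∑ i ∈ s, c i ^ 2 / w i) * √(∑ i ∈ s, w i * d i) :=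
  calc ∑ i ∈ s, c i * √(d i) = ∑ i ∈ s, c i / √(w i) * (√(w i) * √(d i)) :=
        sum_congr rfl fun i hi => by field_simp [(Real.sqrt_pos.2 (hw i hi)).ne']
    _ ≤ √(∑ i ∈ s, (c i / √(w i)) ^ 2) * √(∑ i ∈ s, (√(w i) * √(d i)) ^ 2) :=
        Real.sum_mul_le_sqrt_mul_sqrt s _ _
    _ = √(∑ i ∈ s, c i ^ 2 / w i) * √(∑ i ∈ s, w i * d i) := by
        congr 2 <;> refine sum_congr rfl fun i hi => ?_
        · rw [div_pow, Real.sq_sqrt (hw i hi).le]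
        · rw [mul_pow, Real.sq_sqrt (hw i hi).le, Real.sq_sqrt (hd i hi)]

theorem stmt16_general {n : ℕ} {B : Type*} [Fintype B]
    (q : Fin n → B → ℝ) (δab : Fin n → B → ℝ) (ε : ℝ)
    (hq : ∀ a b, 0 < q a b)
    (hδ0 : ∀ a b, 0 ≤ δab a b)
    (hε : ∑ a, ∑ b, q a b * δab a b = ε) :
    ∑ a : Fin n, ∑ b : B,
        q a b * ∑ i ∈ Finset.univ.filter (fun i : Fin n => i < a), 3 * Real.sqrt (δab i b)
      ≤ 3 * Real.sqrt (∑ a : Fin n, ∑ b : B, (∑ a' : Fin n, q a' b) ^ 2 / q a b)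
          * Real.sqrt ε := by
  calc ∑ a, ∑ b, q a b * ∑ i ∈ univ.filter (· < a), 3 * √(δab i b)
      = ∑ b, ∑ i, 3 * √(δab i b) * ∑ a ∈ univ.filter (i < ·), q a b := by
        rw [sum_comm]
        exact sum_congr rfl fun b _ => sum_mul_sum_filter_comm (· < ·) (q · b) _
    _ ≤ ∑ b, ∑ i, 3 * √(δab i b) * ∑ a', q a' b := by
        gcongr ∑ b, ∑ i, _ * ?_ with b _ i _
        exact sum_le_univ_sum_of_nonneg fun a => (hq a b).le
    _ = 3 * ∑ p : Fin n × B, (∑ a', q a' p.2) * √(δab p.1 p.2) := by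
        rw [sum_comm, Fintype.sum_prod_type, mul_sum]
        refine sum_congr rfl fun i _ => ?_
        rw [mul_sum]
        exact sum_congr rfl fun b _ => by ring
    _ ≤ 3 * (√(∑ p : Fin n × B, (∑ a', q a' p.2) ^ 2 / q p.1 p.2)
          * √(∑ p : Fin n × B, q p.1 p.2 * δab p.1 p.2)) := by
        gcongr
        exact Real.sum_mul_sqrt_le_sqrt_sum_sq_div_mul_sqrt_sum_mul _
          (fun p _ => hq p.1 p.2) fun p _ => hδ0 p.1 p.2
    _ = 3 * √(∑ a, ∑ b, (∑ a', q a' b) ^ 2 / q a b) * √ε := by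
        rw [Fintype.sum_prod_type, Fintype.sum_prod_type, hε, mul_assoc]

/-- for a full-support distribution q on {1,…,n} × B and
δ_{ab} ∈ [0,1] with Σ_{ab} q(a,b) δ_{ab} = ε,
Σ_{ab} q(a,b) Σ_{i<a} 3√(δ_{ib}) ≤ 3 √(Σ_{ab} q(b)²/q(a,b)) √ε. -/
theorem stmt16 {n : ℕ} {B : Type*} [Fintype B]
    (q : Fin n → B → ℝ) (δab : Fin n → B → ℝ) (ε : ℝ)
    (hq : ∀ a b, 0 < q a b) (hqsum : ∑ a, ∑ b, q a b = 1)
    (hδ0 : ∀ a b, 0 ≤ δab a b) (hδ1 : ∀ a b, δab a b ≤ 1)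
    (hε : ∑ a, ∑ b, q a b * δab a b = ε) :
    ∑ a : Fin n, ∑ b : B,
        q a b * ∑ i ∈ Finset.univ.filter (fun i : Fin n => i < a), 3 * Real.sqrt (δab i b)
      ≤ 3 * Real.sqrt (∑ a : Fin n, ∑ b : B, (∑ a' : Fin n, q a' b) ^ 2 / q a b)
          * Real.sqrt ε :=
  stmt16_general q δab ε hq hδ0 hε
end
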